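/- arXiv:1706.10222 — 3 statements merged into one kernel-verified Lean document; each statement's English description precedes it below -/
import Mathlib

section
/- Let A be a discrete valuation ring with fraction field K, uniformizer π, and residue field k. Then K^M_n(K) is generated as an abelian group by symbols of the form {π, u_2, ..., u_n} and {u_1, u_2, ..., u_n} where all u_i are units of A. -/
/-!
By multilinearity, `K^M_n(K)` is generated by symbols whose entries lie in any generating set of
`Kˣ`, for instance `{π} ∪ Aˣ`, since every `x ∈ Kˣ` is `u π^m`. The relation `{x, -x} = 0` gives
antisymmetry and `{π, π} = {π, -1}`, so all but one entry `π` can be replaced by the unit `-1`, and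
the remaining `π` can be moved to the first slot.
-/

/-- The set of relations defining Milnor K-theory: multilinearity relations and
Steinberg relations, inside the free abelian group on `n`-tuples of units. -/
def MilnorRelSet (F : Type*) [Field F] (n : ℕ) : Set (FreeAbelianGroup (Fin n → Fˣ)) :=
  { x | ∃ (a : Fin n → Fˣ) (i : Fin n) (b : Fˣ),
      x = FreeAbelianGroup.of (Function.update a i (a i * b)) -
          FreeAbelianGroup.of a - FreeAbelianGroup.of (Function.update a i b) } ∪
  { x | ∃ (a : Fin n → Fˣ) (i j : Fin n), i ≠ j ∧ ((a i : F) + (a j : F) = 1) ∧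
      x = FreeAbelianGroup.of a }

/-- The `n`-th Milnor K-group of a field `F`. -/
def MilnorK (n : ℕ) (F : Type*) [Field F] : Type _ :=
  FreeAbelianGroup (Fin n → Fˣ) ⧸ AddSubgroup.closure (MilnorRelSet F n)

instance (n : ℕ) (F : Type*) [Field F] : AddCommGroup (MilnorK n F) :=
  QuotientAddGroup.Quotient.addCommGroup _

/-- The symbol `{a 0, ..., a (n-1)}` in Milnor K-theory. -/
def MilnorSymbol {n : ℕ} {F : Type*} [Field F] (a : Fin n → Fˣ) : MilnorK n F :=
  QuotientAddGroup.mk (FreeAbelianGroup.of a)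

namespace MilnorK

open Function

variable {F : Type*} [Field F] {n : ℕ}

theorem closure_range_milnorSymbol :
    AddSubgroup.closure (Set.range (MilnorSymbol : (Fin n → Fˣ) → MilnorK n F)) = ⊤ := by
  rw [eq_top_iff]
  rintro x -
  induction x using QuotientAddGroup.induction_on with
  | H y =>
    induction y using FreeAbelianGroup.induction_on with
    | zero => exact zero_mem _
    | of a => exact AddSubgroup.subset_closure ⟨a, rfl⟩
    | neg a ha => exact neg_mem ha
    | add y z hy hz => exact add_mem hy hz

theorem mk_eq_zero_of_mem_milnorRelSet {x : FreeAbelianGroup (Fin n → Fˣ)}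
    (hx : x ∈ MilnorRelSet F n) : (QuotientAddGroup.mk x : MilnorK n F) = 0 :=
  (QuotientAddGroup.eq_zero_iff x).2 (AddSubgroup.subset_closure hx)

theorem milnorSymbol_update_mul (a : Fin n → Fˣ) (i : Fin n) (x y : Fˣ) :
    MilnorSymbol (update a i (x * y)) =
      (MilnorSymbol (update a i x) : MilnorK n F) + MilnorSymbol (update a i y) := by
  have h := mk_eq_zero_of_mem_milnorRelSet (F := F) (Or.inl ⟨update a i x, i, y, rfl⟩)
  simp only [update_self, update_idem] at h
  rwa [QuotientAddGroup.mk_sub, QuotientAddGroup.mk_sub, sub_sub, sub_eq_zero] at h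

theorem milnorSymbol_eq_zero_of_add_eq_one (a : Fin n → Fˣ) {i j : Fin n} (hij : i ≠ j)
    (h : (a i : F) + a j = 1) : MilnorSymbol a = (0 : MilnorK n F) :=
  mk_eq_zero_of_mem_milnorRelSet (Or.inr ⟨a, i, j, hij, h, rfl⟩)

theorem milnorSymbol_update_one (a : Fin n → Fˣ) (i : Fin n) :
    MilnorSymbol (update a i 1) = (0 : MilnorK n F) := by
  simpa using milnorSymbol_update_mul a i 1 1

theorem milnorSymbol_update_inv (a : Fin n → Fˣ) (i : Fin n) (x : Fˣ) :
    MilnorSymbol (update a i x⁻¹) = -(MilnorSymbol (update a i x) : MilnorK n F) := by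
  have h := milnorSymbol_update_mul a i x x⁻¹
  rw [mul_inv_cancel, milnorSymbol_update_one] at h
  exact eq_neg_of_add_eq_zero_right h.symm

/-- Write `-x = (1 - x) / (1 - x⁻¹)` and use `{x, 1 - x} = 0 = {x⁻¹, 1 - x⁻¹}`. -/
theorem milnorSymbol_eq_zero_of_eq_neg (a : Fin n → Fˣ) {i j : Fin n} (hij : i ≠ j)
    (h : a j = -a i) : MilnorSymbol a = (0 : MilnorK n F) := by
  set x := a i
  by_cases hx : x = 1
  · have ha : a = update a i 1 := by rw [← hx, update_eq_self]
    rw [ha]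
    exact milnorSymbol_update_one a i
  have hx' : (x : F) ≠ 1 := fun h ↦ hx (Units.ext h)
  have hx'' : (x : F)⁻¹ ≠ 1 := inv_ne_one.2 hx'
  let u : Fˣ := Units.mk0 (1 - x) (sub_ne_zero.2 hx'.symm)
  let v : Fˣ := Units.mk0 (1 - (x : F)⁻¹) (sub_ne_zero.2 hx''.symm)
  have hneg : -x = u * v⁻¹ := by
    ext
    simp only [u, v, Units.val_neg, Units.val_mul, Units.val_inv_eq_inv_val, Units.val_mk0]
    field_simp [sub_ne_zero.2 hx']
    ring
  have hu : MilnorSymbol (update a j u) = (0 : MilnorK n F) :=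
    milnorSymbol_eq_zero_of_add_eq_one _ hij (by simp [update_of_ne hij, u, x])
  have hv : MilnorSymbol (update (update a j v) i x⁻¹) = (0 : MilnorK n F) :=
    milnorSymbol_eq_zero_of_add_eq_one _ hij (by simp [update_of_ne hij.symm, v])
  have hv' : MilnorSymbol (update a j v) = (0 : MilnorK n F) := by
    have ha : update a j v = update (update a j v) i x⁻¹⁻¹ := by
      rw [inv_inv, eq_comm, update_eq_self_iff, update_of_ne hij]
    rw [ha, milnorSymbol_update_inv, hv, neg_zero]
  rw [← update_eq_self j a, h, hneg, milnorSymbol_update_mul, milnorSymbol_update_inv, hu, hv',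
    neg_zero, add_zero]

theorem milnorSymbol_comp_swap (a : Fin n → Fˣ) {i j : Fin n} (hij : i ≠ j) :
    MilnorSymbol (a ∘ Equiv.swap i j) = -(MilnorSymbol a : MilnorK n F) := by
  let f (x y : Fˣ) : MilnorK n F := MilnorSymbol (update (update a i x) j y)
  have add_left (x x' y : Fˣ) : f (x * x') y = f x y + f x' y := by
    simp only [f, update_comm hij, milnorSymbol_update_mul]
  have add_right (x y y' : Fˣ) : f x (y * y') = f x y + f x y' :=
    milnorSymbol_update_mul _ j y y'
  have self_neg (x : Fˣ) : f x (-x) = 0 :=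
    milnorSymbol_eq_zero_of_eq_neg _ hij (by simp [update_of_ne hij])
  have antisymm (x y : Fˣ) : f x y + f y x = 0 := by
    have h₁ : f x (-(x * y)) = f x y := by rw [← neg_mul, add_right, self_neg, zero_add]
    have h₂ : f y (-(x * y)) = f y x := by rw [← mul_neg, add_right, self_neg, add_zero]
    rw [← h₁, ← h₂, ← add_left, self_neg]
  refine eq_neg_of_add_eq_zero_left ?_
  simpa [f, Equiv.comp_swap_eq_update, update_comm hij.symm] using antisymm (a j) (a i)

theorem milnorSymbol_eq_update_neg_one (a : Fin n → Fˣ) {i j : Fin n} (hij : i ≠ j)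
    (h : a j = a i) : MilnorSymbol a = (MilnorSymbol (update a j (-1)) : MilnorK n F) := by
  have ha : a = update a j (-1 * -a i) := by rw [neg_one_mul, neg_neg, ← h, update_eq_self]
  conv_lhs => rw [ha]
  rw [milnorSymbol_update_mul,
    milnorSymbol_eq_zero_of_eq_neg (update a j (-a i)) hij (by simp [update_of_ne hij]),
    add_zero]

theorem closure_milnorSymbol_eq_top_of_closure_eq_top {T : Set Fˣ}
    (hT : Subgroup.closure T = ⊤) :
    AddSubgroup.closure {x : MilnorK n F | ∃ a, x = MilnorSymbol a ∧ ∀ i, a i ∈ T} = ⊤ := by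
  set H := AddSubgroup.closure {x : MilnorK n F | ∃ a, x = MilnorSymbol a ∧ ∀ i, a i ∈ T}
  rw [eq_top_iff, ← closure_range_milnorSymbol, AddSubgroup.closure_le]
  rintro _ ⟨a, rfl⟩
  suffices ∀ s : Finset (Fin n), ∀ a : Fin n → Fˣ, (∀ i ∉ s, a i ∈ T) → MilnorSymbol a ∈ H from
    this Finset.univ a (by simp)
  intro s
  induction s using Finset.induction_on with
  | empty => exact fun a ha ↦ AddSubgroup.subset_closure ⟨a, rfl, fun i ↦ ha i (by simp)⟩
  | insert j s _ ih =>
    intro a ha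
    have hmem (x : Fˣ) (hx : x ∈ Subgroup.closure T) : MilnorSymbol (update a j x) ∈ H := by
      induction hx using Subgroup.closure_induction with
      | mem x hx =>
        refine ih _ fun i hi ↦ ?_
        rcases eq_or_ne i j with rfl | hij
        · simpa using hx
        · simpa [update_of_ne hij] using ha i (by simp [hij, hi])
      | one => simpa only [milnorSymbol_update_one] using zero_mem H
      | mul x y _ _ hx hy => simpa only [milnorSymbol_update_mul] using add_mem hx hy
      | inv x _ hx => simpa only [milnorSymbol_update_inv] using neg_mem hx
    simpa using hmem (a j) (hT ▸ Subgroup.mem_top _)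

def unitOrPivotSymbols (U : Set Fˣ) (p : Fˣ) (i₀ : Fin n) : Set (MilnorK n F) :=
  {x | ∃ a : Fin n → Fˣ, x = MilnorSymbol a ∧ ((∀ i, a i ∈ U) ∨ (a i₀ = p ∧ ∀ i, i ≠ i₀ → a i ∈ U))}

theorem milnorSymbol_mem_closure_unitOrPivotSymbols_of_unique {U : Set Fˣ} {p : Fˣ} (i₀ : Fin n)
    (a : Fin n → Fˣ) {i : Fin n} (hi : a i = p) (hother : ∀ j, j ≠ i → a j ∈ U) :
    MilnorSymbol a ∈ AddSubgroup.closure (unitOrPivotSymbols U p i₀) := by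
  have hmem :
      MilnorSymbol (a ∘ Equiv.swap i i₀) ∈ AddSubgroup.closure (unitOrPivotSymbols U p i₀) :=
    AddSubgroup.subset_closure ⟨_, rfl, Or.inr ⟨by simpa using hi, fun j hj ↦
      hother _ (by simpa using (Equiv.swap i i₀).injective.ne hj)⟩⟩
  rcases eq_or_ne i i₀ with rfl | hne
  · simpa using hmem
  · rw [← neg_neg (MilnorSymbol a), ← milnorSymbol_comp_swap a hne]
    exact neg_mem hmem

/-- Induction on the number of entries outside `U`: two entries `p` can be traded for `p` and
`-1 ∈ U`, since `{p, p} = {p, -1}`. -/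
theorem milnorSymbol_mem_closure_unitOrPivotSymbols {U : Set Fˣ} (hU : -1 ∈ U) {p : Fˣ}
    (i₀ : Fin n) (a : Fin n → Fˣ) (ha : ∀ i, a i ∈ insert p U) :
    MilnorSymbol a ∈ AddSubgroup.closure (unitOrPivotSymbols U p i₀) := by
  classical
  induction hc : (Finset.univ.filter fun i ↦ a i ∉ U).card using Nat.strong_induction_on
    generalizing a with
  | _ c ih =>
  by_cases hall : ∀ i, a i ∈ U
  · exact AddSubgroup.subset_closure ⟨a, rfl, Or.inl hall⟩
  obtain ⟨i, hi⟩ := not_forall.1 hall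
  have hip : a i = p := (ha i).resolve_right hi
  by_cases hother : ∃ j, j ≠ i ∧ a j ∉ U
  · obtain ⟨j, hji, hj⟩ := hother
    rw [milnorSymbol_eq_update_neg_one a hji.symm (((ha j).resolve_right hj).trans hip.symm)]
    have hfilter : (Finset.univ.filter fun k ↦ update a j (-1) k ∉ U) =
        (Finset.univ.filter fun k ↦ a k ∉ U).erase j := by
      ext k
      rcases eq_or_ne k j with rfl | hkj <;> simp [*]
    refine ih _ ?_ _ (fun k ↦ ?_) rfl
    · rw [← hc, hfilter]
      exact Finset.card_erase_lt_of_mem (by simpa using hj)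
    · rcases eq_or_ne k j with rfl | hkj
      · simp [hU]
      · simpa [update_of_ne hkj] using ha k
  · push Not at hother
    exact milnorSymbol_mem_closure_unitOrPivotSymbols_of_unique i₀ a hip hother

end MilnorK

theorem IsDiscreteValuationRing.closure_insert_range_unitsMap_eq_top {A K : Type*} [CommRing A]
    [IsDomain A] [IsDiscreteValuationRing A] [Field K] [Algebra A K] [IsFractionRing A K] {π : A}
    (hπ : Irreducible π) {p : Kˣ} (hp : (p : K) = algebraMap A K π) :
    Subgroup.closure (insert p ((Units.map (algebraMap A K : A →* K)).range : Set Kˣ)) = ⊤ := by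
  refine eq_top_iff.2 fun x _ ↦ ?_
  obtain ⟨m, u, hx⟩ := exists_units_eq_smul_zpow_of_irreducible hπ x.ne_zero
  have hx' : x = Units.map (algebraMap A K : A →* K) u * p ^ m := by
    ext
    simp [hx, hp, Units.smul_def, Algebra.smul_def]
  rw [hx']
  exact mul_mem (Subgroup.subset_closure (Set.mem_insert_of_mem _ ⟨u, rfl⟩))
    (zpow_mem (Subgroup.subset_closure (Set.mem_insert _ _)) m)

/-- For a DVR `A` with fraction field `K` and uniformizer `π`, the group `K^M_n(K)` is
generated by symbols `{π, u_2, ..., u_n}` and `{u_1, ..., u_n}` with all `u_i ∈ Aˣ`. -/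
theorem milnorK_generated_by_uniformizer_and_unit_symbols
    (A : Type*) [CommRing A] [IsDomain A] [IsDiscreteValuationRing A]
    (K : Type*) [Field K] [Algebra A K] [IsFractionRing A K]
    (π : A) (hπ : Irreducible π) (n : ℕ) (hn : 0 < n) :
    AddSubgroup.closure
      { x : MilnorK n K | ∃ a : Fin n → Kˣ, x = MilnorSymbol a ∧
          ((∀ i, ∃ u : Aˣ, ((a i : K) = algebraMap A K u)) ∨
           (((a ⟨0, hn⟩ : K) = algebraMap A K π) ∧
            ∀ i, i ≠ ⟨0, hn⟩ → ∃ u : Aˣ, (a i : K) = algebraMap A K u)) } = ⊤ := by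
  let φ : Aˣ →* Kˣ := Units.map (algebraMap A K : A →* K)
  have hφ (x : Kˣ) : x ∈ φ.range ↔ ∃ u : Aˣ, (x : K) = algebraMap A K u :=
    ⟨fun ⟨u, hu⟩ ↦ ⟨u, by rw [← hu]; rfl⟩, fun ⟨u, hu⟩ ↦ ⟨u, Units.ext hu.symm⟩⟩
  let p : Kˣ := Units.mk0 (algebraMap A K π)
    ((map_ne_zero_iff _ (IsFractionRing.injective A K)).2 hπ.ne_zero)
  rw [eq_top_iff, ← MilnorK.closure_milnorSymbol_eq_top_of_closure_eq_top
    (IsDiscreteValuationRing.closure_insert_range_unitsMap_eq_top hπ (p := p) rfl),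
    AddSubgroup.closure_le]
  rintro _ ⟨a, rfl, ha⟩
  refine AddSubgroup.closure_mono ?_ (MilnorK.milnorSymbol_mem_closure_unitOrPivotSymbols
    (U := φ.range) (φ.mem_range.2 ⟨-1, Units.map_neg_one (algebraMap A K)⟩) ⟨0, hn⟩ a ha)
  rintro _ ⟨b, rfl, hb⟩
  exact ⟨b, rfl, by simpa only [SetLike.mem_coe, hφ, p, Units.ext_iff, Units.val_mk0] using hb⟩
end

section
/- Let A be a discrete valuation ring with fraction field K, uniformizer π, and residue field k. There exists a group homomorphism sp_π : K^M_n(K) → K^M_n(k) satisfying sp_π({π^{i_1} u_1, ..., π^{i_n} u_n}) = {ū_1, ..., ū_n} for all integers i_1, ..., i_n and units u_1, ..., u_n of A. -/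
/-!
Every unit of `K` is uniquely `p ^ m * w` with `w ∈ Aˣ`, so `x ↦ w̄` is a homomorphism
`Kˣ → kˣ`. Applied slotwise it respects multilinearity, and a Steinberg pair `x + y = 1` goes
to a pair `(a, b)` with `a + b = 1`, `a = 1`, `b = 1` or `a + b = 0`: clearing denominators in
`π ^ r u + π ^ s v = 1` and reducing modulo `π` leaves only these cases. Each of them gives a
vanishing symbol in `K^M_n(k)`.
-/

open Function

section MilnorSymbol

variable {F : Type*} [Field F] {n : ℕ}

theorem milnorSymbol_update_mul (a : Fin n → Fˣ) (i : Fin n) (b c : Fˣ) :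
    MilnorSymbol (update a i (b * c)) =
      MilnorSymbol (update a i b) + MilnorSymbol (update a i c) := by
  have hrel : FreeAbelianGroup.of (update (update a i b) i (update a i b i * c)) -
      FreeAbelianGroup.of (update a i b) - FreeAbelianGroup.of (update (update a i b) i c) ∈
        AddSubgroup.closure (MilnorRelSet F n) :=
    AddSubgroup.subset_closure (Or.inl ⟨_, i, c, rfl⟩)
  rw [← QuotientAddGroup.eq_zero_iff, QuotientAddGroup.mk_sub, QuotientAddGroup.mk_sub,
    sub_sub, sub_eq_zero] at hrel
  simp only [update_self, update_idem] at hrel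
  exact hrel

theorem milnorSymbol_update_one (a : Fin n → Fˣ) (i : Fin n) :
    MilnorSymbol (update a i 1) = 0 := by
  simpa only [mul_one, left_eq_add] using milnorSymbol_update_mul a i 1 1

theorem milnorSymbol_eq_zero_of_eq_one {a : Fin n → Fˣ} {i : Fin n} (h : a i = 1) :
    MilnorSymbol a = 0 := by
  rw [← update_eq_self i a, h, milnorSymbol_update_one]

theorem milnorSymbol_update_inv (a : Fin n → Fˣ) (i : Fin n) (b : Fˣ) :
    MilnorSymbol (update a i b⁻¹) = -MilnorSymbol (update a i b) := by
  refine eq_neg_of_add_eq_zero_left ?_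
  rw [← milnorSymbol_update_mul, inv_mul_cancel, milnorSymbol_update_one]

theorem milnorSymbol_eq_zero_of_add_eq_one {a : Fin n → Fˣ} {i j : Fin n} (hij : i ≠ j)
    (h : (a i : F) + a j = 1) : MilnorSymbol a = 0 :=
  (QuotientAddGroup.eq_zero_iff _).mpr
    (AddSubgroup.subset_closure (Or.inr ⟨a, i, j, hij, h, rfl⟩))

/-- `{x, -x} = 0`, from `-x = (1 - x) / (1 - x⁻¹)` and the Steinberg relation. -/
theorem milnorSymbol_eq_zero_of_add_eq_zero {a : Fin n → Fˣ} {i j : Fin n} (hij : i ≠ j)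
    (h : (a i : F) + a j = 0) : MilnorSymbol a = 0 := by
  set x := a i with hx
  by_cases hx1 : x = 1
  · exact milnorSymbol_eq_zero_of_eq_one hx1
  have hx1' : (x : F) ≠ 1 := fun h => hx1 (Units.ext h)
  let y₁ : Fˣ := Units.mk0 (1 - x) (sub_ne_zero.2 hx1'.symm)
  let y₂ : Fˣ := Units.mk0 (1 - x⁻¹) (sub_ne_zero.2 (by simpa [eq_comm] using hx1'))
  have haj : a j = y₁ * y₂⁻¹ := by
    ext
    have : (x : F) - 1 ≠ 0 := sub_ne_zero.2 hx1'
    simp [y₁, y₂, eq_neg_of_add_eq_zero_right h]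
    field_simp
    ring
  have hy₁ : MilnorSymbol (update a j y₁) = 0 :=
    milnorSymbol_eq_zero_of_add_eq_one hij (by simp [update_of_ne hij, y₁, ← hx])
  have hy₂ : MilnorSymbol (update a j y₂) = 0 := by
    have : update a j y₂ = update (update a j y₂) i x⁻¹⁻¹ := by
      rw [inv_inv, hx, ← update_of_ne hij y₂ a, update_eq_self]
    rw [this, milnorSymbol_update_inv, neg_eq_zero]
    exact milnorSymbol_eq_zero_of_add_eq_one hij (by simp [update_of_ne hij.symm, y₂])
  rw [← update_eq_self j a, haj, milnorSymbol_update_mul, milnorSymbol_update_inv, hy₁, hy₂,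
    neg_zero, add_zero]

end MilnorSymbol

namespace MilnorK

variable {F L : Type*} [Field F] [Field L] {n : ℕ}

def map (f : Fˣ →* Lˣ)
    (hf : ∀ (a : Fin n → Fˣ) (i j : Fin n), i ≠ j → (a i : F) + a j = 1 →
      MilnorSymbol (f ∘ a) = 0) :
    MilnorK n F →+ MilnorK n L :=
  QuotientAddGroup.lift _ (FreeAbelianGroup.lift fun a => MilnorSymbol (f ∘ a)) <| by
    rw [AddSubgroup.closure_le]
    rintro _ (⟨a, i, b, rfl⟩ | ⟨a, i, j, hij, h, rfl⟩)
    · have hfa : update (f ∘ a) i (f (a i)) = f ∘ a := update_eq_self i (f ∘ a)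
      simp only [SetLike.mem_coe, AddMonoidHom.mem_ker, map_sub, FreeAbelianGroup.lift_apply_of,
        comp_update, map_mul]
      rw [milnorSymbol_update_mul, hfa]
      abel
    · simpa using hf a i j hij h

theorem map_milnorSymbol (f : Fˣ →* Lˣ)
    (hf : ∀ (a : Fin n → Fˣ) (i j : Fin n), i ≠ j → (a i : F) + a j = 1 →
      MilnorSymbol (f ∘ a) = 0) (a : Fin n → Fˣ) :
    map f hf (MilnorSymbol a) = MilnorSymbol (f ∘ a) :=
  FreeAbelianGroup.lift_apply_of _ _

end MilnorK

namespace IsDiscreteValuationRing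

open IsLocalRing

variable {A : Type*} [CommRing A] [IsDomain A] [IsDiscreteValuationRing A]
  {K : Type*} [Field K] [Algebra A K] [IsFractionRing A K] {π : A}

theorem residue_cases_of_zpow_mul_add_zpow_mul_eq_one (hπ : Irreducible π) {r s : ℤ}
    (hrs : r ≤ s) {u v : Aˣ}
    (h : algebraMap A K π ^ r * algebraMap A K u + algebraMap A K π ^ s * algebraMap A K v = 1) :
    residue A u + residue A v = 1 ∨ residue A u = 1 ∨ residue A u + residue A v = 0 := by
  have hπK : algebraMap A K π ≠ 0 := by simpa using hπ.ne_zero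
  have hres : residue A π = 0 := (residue_eq_zero_iff π).2 hπ.not_isUnit
  have hu : residue A u ≠ 0 := (u.isUnit.map (residue A)).ne_zero
  obtain ⟨d, rfl⟩ : ∃ d : ℕ, s = r + d := ⟨(s - r).toNat, by omega⟩
  rcases le_or_gt 0 r with hr | hr
  · obtain ⟨a, rfl⟩ := Int.eq_ofNat_of_zero_le hr
    have hA : π ^ a * u + π ^ (a + d) * v = 1 := IsFractionRing.injective A K <| by
      simpa [← zpow_natCast] using h
    have := congr_arg (residue A) hA
    simp only [map_add, map_mul, map_pow, map_one, hres] at this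
    rcases a with _ | a <;> rcases d with _ | d <;> simp_all
  · obtain ⟨c, rfl⟩ : ∃ c : ℕ, r = -(c + 1 : ℕ) := ⟨(-r - 1).toNat, by omega⟩
    have hA : (u : A) + π ^ d * v = π ^ (c + 1) := IsFractionRing.injective A K <| by
      have := congr_arg (algebraMap A K π ^ (c + 1 : ℕ) * ·) h
      simp only [mul_add, ← mul_assoc, ← zpow_natCast, ← zpow_add₀ hπK, add_neg_cancel,
        add_neg_cancel_left, zpow_zero, one_mul, mul_one] at this
      simp only [map_add, map_mul, map_pow]
      exact_mod_cast this
    have := congr_arg (residue A) hA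
    simp only [map_add, map_mul, map_pow, hres] at this
    rcases d with _ | d <;> simp_all

variable {p : Kˣ}

noncomputable def zpowMulUnitsEquiv (hπ : Irreducible π) (hp : (p : K) = algebraMap A K π) :
    Multiplicative ℤ × Aˣ ≃* Kˣ :=
  MulEquiv.ofBijective ((zpowersHom Kˣ p).coprod (Units.map (algebraMap A K).toMonoidHom)) <| by
    refine ⟨(injective_iff_map_eq_one _).2 fun ⟨m, w⟩ h => ?_, fun x => ?_⟩
    · have hK : algebraMap A K π ^ m.toAdd * algebraMap A K w = 1 := by
        simpa [hp] using congr_arg Units.val h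
      suffices m.toAdd = 0 ∧ w = 1 from Prod.ext this.1 this.2
      obtain ⟨k, hk | hk⟩ := Int.eq_nat_or_neg m.toAdd
      · have hA : (w : A) * π ^ k = (1 : Aˣ) * π ^ 0 := IsFractionRing.injective A K <| by
          simpa [hk, mul_comm] using hK
        exact ⟨by simpa [hk] using unit_mul_pow_congr_pow hπ hπ _ _ _ _ hA,
          unit_mul_pow_congr_unit hπ _ _ _ _ hA⟩
      · have hπK : algebraMap A K π ≠ 0 := by simpa using hπ.ne_zero
        have hA : (w : A) * π ^ 0 = (1 : Aˣ) * π ^ k := IsFractionRing.injective A K <| by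
          rw [hk, zpow_neg, zpow_natCast, inv_mul_eq_one₀ (pow_ne_zero _ hπK)] at hK
          simpa using hK.symm
        exact ⟨by simpa [hk] using (unit_mul_pow_congr_pow hπ hπ _ _ _ _ hA).symm,
          unit_mul_pow_congr_unit hπ _ _ _ _ hA⟩
    · obtain ⟨m, w, hx⟩ := exists_units_eq_smul_zpow_of_irreducible hπ (K := K) x.ne_zero
      refine ⟨(.ofAdd m, w), Units.ext ?_⟩
      simp [hx, hp, Units.smul_def, Algebra.smul_def, mul_comm]

theorem zpowMulUnitsEquiv_apply (hπ : Irreducible π) (hp : (p : K) = algebraMap A K π)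
    (m : Multiplicative ℤ) (w : Aˣ) :
    zpowMulUnitsEquiv hπ hp (m, w) = p ^ m.toAdd * Units.map (algebraMap A K).toMonoidHom w :=
  rfl

noncomputable def residualUnit (hπ : Irreducible π) (hp : (p : K) = algebraMap A K π) :
    Kˣ →* (ResidueField A)ˣ :=
  (Units.map (residue A).toMonoidHom).comp
    ((MonoidHom.snd _ _).comp (zpowMulUnitsEquiv hπ hp).symm.toMonoidHom)

theorem residualUnit_zpowMulUnitsEquiv (hπ : Irreducible π) (hp : (p : K) = algebraMap A K π)
    (z : Multiplicative ℤ × Aˣ) :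
    residualUnit hπ hp (zpowMulUnitsEquiv hπ hp z) = Units.map (residue A).toMonoidHom z.2 := by
  simp [residualUnit]

theorem residualUnit_zpow_mul (hπ : Irreducible π) (hp : (p : K) = algebraMap A K π)
    (m : ℤ) (w : Aˣ) :
    residualUnit hπ hp (p ^ m * Units.map (algebraMap A K).toMonoidHom w) =
      Units.map (residue A).toMonoidHom w :=
  residualUnit_zpowMulUnitsEquiv hπ hp (.ofAdd m, w)

theorem residualUnit_cases_of_add_eq_one (hπ : Irreducible π) (hp : (p : K) = algebraMap A K π)
    {x y : Kˣ} (h : (x : K) + y = 1) :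
    (residualUnit hπ hp x : ResidueField A) + residualUnit hπ hp y = 1 ∨
      residualUnit hπ hp x = 1 ∨ residualUnit hπ hp y = 1 ∨
      (residualUnit hπ hp x : ResidueField A) + residualUnit hπ hp y = 0 := by
  obtain ⟨⟨r, u⟩, rfl⟩ := (zpowMulUnitsEquiv hπ hp).surjective x
  obtain ⟨⟨s, v⟩, rfl⟩ := (zpowMulUnitsEquiv hπ hp).surjective y
  simp only [zpowMulUnitsEquiv_apply, Units.val_mul, Units.val_zpow_eq_zpow_val, hp] at h
  simp only [residualUnit_zpowMulUnitsEquiv, Units.ext_iff, Units.coe_map, Units.val_one]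
  rcases le_total r.toAdd s.toAdd with hrs | hsr
  · rcases residue_cases_of_zpow_mul_add_zpow_mul_eq_one hπ hrs h with hres | hres | hres <;>
      simp [hres]
  · rw [add_comm] at h
    rcases residue_cases_of_zpow_mul_add_zpow_mul_eq_one hπ hsr h with hres | hres | hres <;>
      simp [add_comm (residue A (u : A)), hres]

end IsDiscreteValuationRing

/-- Existence of the specialisation map `sp_π : K^M_n(K) → K^M_n(k)` for a DVR `A` with
fraction field `K`, uniformizer `π` and residue field `k`: it sends
`{π^{i_1}u_1, ..., π^{i_n}u_n}` to `{ū_1, ..., ū_n}` for units `u_i` of `A`. -/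
theorem specialisation_map_exists
    (A : Type*) [CommRing A] [IsDomain A] [IsDiscreteValuationRing A]
    (K : Type*) [Field K] [Algebra A K] [IsFractionRing A K]
    (π : A) (hπ : Irreducible π) (p : Kˣ) (hp : (p : K) = algebraMap A K π) (n : ℕ) :
    ∃ sp : MilnorK n K →+ MilnorK n (IsLocalRing.ResidueField A),
      ∀ (m : Fin n → ℤ) (u : Fin n → Aˣ),
        sp (MilnorSymbol (fun i => p ^ (m i) * Units.map (algebraMap A K).toMonoidHom (u i))) =
          MilnorSymbol (fun i => Units.map (IsLocalRing.residue A).toMonoidHom (u i)) := by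
  refine ⟨MilnorK.map (IsDiscreteValuationRing.residualUnit hπ hp) fun a i j hij h => ?_,
    fun m u => ?_⟩
  · rcases IsDiscreteValuationRing.residualUnit_cases_of_add_eq_one hπ hp h with
      hsum | hi | hj | hsum
    · exact milnorSymbol_eq_zero_of_add_eq_one hij hsum
    · exact milnorSymbol_eq_zero_of_eq_one hi
    · exact milnorSymbol_eq_zero_of_eq_one hj
    · exact milnorSymbol_eq_zero_of_add_eq_zero hij hsum
  · rw [MilnorK.map_milnorSymbol]
    exact congr_arg MilnorSymbol <|
      funext fun i => IsDiscreteValuationRing.residualUnit_zpow_mul hπ hp (m i) (u i)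
end

section
/- Let A be a discrete valuation ring with fraction field K, uniformizer π, and residue field k, and let ∂ be the tame symbol and sp_π the specialisation map. Then for every α ∈ K^M_n(K), sp_π(α) = ∂({-π} · α), where {-π} · α denotes the product of the symbol {-π} ∈ K^M_1(K) with α in the Milnor K-ring. -/
/-! Every unit of `K` is `π ^ m * u` with `u ∈ Aˣ`. In the symbol `{-π, a₁, …, aₙ}` the powers of
`π` can be stripped from each `aᵢ`, because `{x, -x} = 0` in Milnor K-theory; what remains is
`{-π, u₁, …, uₙ} = {-1, u₁, …, uₙ} + {π, u₁, …, uₙ}`, on which `∂` gives `0 + {ū₁, …, ūₙ}`, that is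
`sp_π {a₁, …, aₙ}`. Both sides of `sp_π = ∂ ∘ {-π}·` are additive, so agreement on symbols
suffices. -/

namespace MilnorK

variable {F : Type*} [Field F] {n : ℕ}

theorem symbol_update_mul (a : Fin n → Fˣ) (i : Fin n) (x y : Fˣ) :
    (MilnorSymbol (Function.update a i (x * y)) : MilnorK n F) =
      MilnorSymbol (Function.update a i x) + MilnorSymbol (Function.update a i y) := by
  have hrel : FreeAbelianGroup.of (Function.update a i (x * y)) -
      FreeAbelianGroup.of (Function.update a i x) - FreeAbelianGroup.of (Function.update a i y) ∈
      AddSubgroup.closure (MilnorRelSet F n) :=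
    AddSubgroup.subset_closure <| Or.inl
      ⟨Function.update a i x, i, y, by simp only [Function.update_self, Function.update_idem]⟩
  rw [← sub_eq_zero, ← sub_sub]
  have h := (QuotientAddGroup.eq_zero_iff _).2 hrel
  rw [QuotientAddGroup.mk_sub, QuotientAddGroup.mk_sub] at h
  exact h

theorem symbol_eq_zero_of_add_eq_one (a : Fin n → Fˣ) {i j : Fin n} (hij : i ≠ j)
    (h : (a i : F) + a j = 1) : (MilnorSymbol a : MilnorK n F) = 0 :=
  (QuotientAddGroup.eq_zero_iff _).2 <|
    AddSubgroup.subset_closure (Or.inr ⟨a, i, j, hij, h, rfl⟩)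

theorem symbol_update_one (a : Fin n → Fˣ) (i : Fin n) :
    (MilnorSymbol (Function.update a i 1) : MilnorK n F) = 0 := by
  simpa using symbol_update_mul a i 1 1

theorem symbol_update_inv (a : Fin n → Fˣ) (i : Fin n) (x : Fˣ) :
    (MilnorSymbol (Function.update a i x⁻¹) : MilnorK n F) =
      -MilnorSymbol (Function.update a i x) := by
  rw [eq_neg_iff_add_eq_zero, add_comm, ← symbol_update_mul, mul_inv_cancel, symbol_update_one]

theorem symbol_update_zpow (a : Fin n → Fˣ) (i : Fin n) (x : Fˣ) (m : ℤ) :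
    (MilnorSymbol (Function.update a i (x ^ m)) : MilnorK n F) =
      m • MilnorSymbol (Function.update a i x) := by
  induction m using Int.induction_on with
  | zero => simpa using symbol_update_one a i
  | succ k ih => rw [zpow_add_one, symbol_update_mul, ih, add_smul, one_smul]
  | pred k ih =>
    rw [zpow_sub_one, symbol_update_mul, ih, symbol_update_inv, sub_smul, one_smul, sub_eq_add_neg]

theorem symbol_eq_zero_of_eq_neg (a : Fin n → Fˣ) {i j : Fin n} (hij : i ≠ j)
    (h : a j = -a i) : (MilnorSymbol a : MilnorK n F) = 0 := by
  suffices key : ∀ x : Fˣ,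
      (MilnorSymbol (Function.update (Function.update a i x) j (-x)) : MilnorK n F) = 0 by
    simpa only [← h, Function.update_eq_self] using key (a i)
  intro x
  have update_i : ∀ w y : Fˣ, Function.update (Function.update (Function.update a i x) j y) i w =
      Function.update (Function.update a i w) j y := fun w y => by
    rw [Function.update_comm hij.symm, Function.update_idem]
  by_cases hx : x = 1
  · rw [hx, ← update_i 1, symbol_update_one]
  have hx' : (x : F) ≠ 1 := fun h => hx (Units.ext h)
  have hx0 : (x : F) ≠ 0 := x.ne_zero
  have hy : (1 : F) - x ≠ 0 := sub_ne_zero.2 hx'.symm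
  have hz : (1 : F) - (x : F)⁻¹ ≠ 0 := sub_ne_zero.2 (by rwa [ne_comm, inv_ne_one])
  -- `-x = (1 - x) / (1 - x⁻¹)`, and both factors pair to zero by the Steinberg relation.
  have hneg : -x = Units.mk0 _ hy * (Units.mk0 _ hz)⁻¹ := Units.ext <| by
    simp only [Units.val_neg, Units.val_mul, Units.val_mk0, Units.val_inv_eq_inv_val]
    field_simp
    ring
  have steinberg_y : (MilnorSymbol (Function.update (Function.update a i x) j
      (Units.mk0 _ hy)) : MilnorK n F) = 0 :=
    symbol_eq_zero_of_add_eq_one _ hij (by simp [Function.update_of_ne hij])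
  have steinberg_z : (MilnorSymbol (Function.update (Function.update a i x⁻¹) j
      (Units.mk0 _ hz)) : MilnorK n F) = 0 :=
    symbol_eq_zero_of_add_eq_one _ hij (by simp [Function.update_of_ne hij])
  have steinberg_z' : (MilnorSymbol (Function.update (Function.update a i x) j
      (Units.mk0 _ hz)) : MilnorK n F) = 0 := by
    have h := symbol_update_inv (Function.update (Function.update a i x) j (Units.mk0 _ hz)) i x
    rw [update_i, update_i, steinberg_z] at h
    exact neg_eq_zero.1 h.symm
  rw [hneg, symbol_update_mul, symbol_update_inv, steinberg_y, steinberg_z', neg_zero, add_zero]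

theorem symbol_cons_mul (a : Fin n → Fˣ) (x y : Fˣ) :
    (MilnorSymbol (Fin.cons (x * y) a) : MilnorK (n + 1) F) =
      MilnorSymbol (Fin.cons x a) + MilnorSymbol (Fin.cons y a) := by
  simpa only [Fin.update_cons_zero] using symbol_update_mul (Fin.cons 1 a) 0 x y

theorem symbol_cons_neg_update_zpow_mul (q : Fˣ) (a : Fin n → Fˣ) (i : Fin n) (m : ℤ)
    (w : Fˣ) :
    (MilnorSymbol (Fin.cons (-q) (Function.update a i (q ^ m * w))) : MilnorK (n + 1) F) =
      MilnorSymbol (Fin.cons (-q) (Function.update a i w)) := by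
  have neg_pair : (MilnorSymbol (Function.update (Fin.cons (-q) a) i.succ q) :
      MilnorK (n + 1) F) = 0 :=
    symbol_eq_zero_of_eq_neg _ (Fin.succ_ne_zero i) <| by
      rw [Function.update_of_ne (Fin.succ_ne_zero i).symm, Function.update_self, Fin.cons_zero]
  rw [Fin.cons_update, Fin.cons_update, symbol_update_mul, symbol_update_zpow, neg_pair,
    smul_zero, zero_add]

theorem symbol_cons_neg_zpow_mul (q : Fˣ) (m : Fin n → ℤ) (a : Fin n → Fˣ) :
    (MilnorSymbol (Fin.cons (-q) (fun i => q ^ m i * a i)) : MilnorK (n + 1) F) =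
      MilnorSymbol (Fin.cons (-q) a) := by
  suffices key : ∀ s : Finset (Fin n),
      (MilnorSymbol (Fin.cons (-q) (s.piecewise (fun i => q ^ m i * a i) a)) :
        MilnorK (n + 1) F) = MilnorSymbol (Fin.cons (-q) a) by
    simpa only [Finset.piecewise_univ] using key Finset.univ
  intro s
  induction s using Finset.induction_on with
  | empty => rw [Finset.piecewise_empty]
  | insert j s hj ih =>
    rw [Finset.piecewise_insert, symbol_cons_neg_update_zpow_mul,
      ← s.piecewise_eq_of_notMem (fun i => q ^ m i * a i) a hj, Function.update_eq_self, ih]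

theorem addMonoidHom_ext {G : Type*} [AddCommGroup G] {f g : MilnorK n F →+ G}
    (h : ∀ a : Fin n → Fˣ, f (MilnorSymbol a) = g (MilnorSymbol a)) : f = g :=
  QuotientAddGroup.addMonoidHom_ext _ <| FreeAbelianGroup.lift_ext _ _ fun a => h a

theorem map_cons_mem_closure_milnorRelSet (q : Fˣ) {x : FreeAbelianGroup (Fin n → Fˣ)}
    (hx : x ∈ MilnorRelSet F n) :
    FreeAbelianGroup.map (Fin.cons (α := fun _ => Fˣ) q) x ∈
      AddSubgroup.closure (MilnorRelSet F (n + 1)) := by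
  refine AddSubgroup.subset_closure ?_
  rcases hx with ⟨a, i, b, rfl⟩ | ⟨a, i, j, hij, hsum, rfl⟩
  · refine Or.inl ⟨Fin.cons q a, i.succ, b, ?_⟩
    simp only [map_sub, FreeAbelianGroup.map_of_apply, Fin.cons_update, Fin.cons_succ]
  · exact Or.inr ⟨Fin.cons q a, i.succ, j.succ, (Fin.succ_injective _).ne hij, by simpa using hsum,
      FreeAbelianGroup.map_of_apply ..⟩

/-- Left multiplication by the symbol `{q}`. -/
def consHom (q : Fˣ) : MilnorK n F →+ MilnorK (n + 1) F :=
  QuotientAddGroup.map _ _ (FreeAbelianGroup.map (Fin.cons (α := fun _ => Fˣ) q)) <|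
    (AddSubgroup.closure_le _).2 fun _ hx => map_cons_mem_closure_milnorRelSet q hx

theorem consHom_symbol (q : Fˣ) (a : Fin n → Fˣ) :
    consHom q (MilnorSymbol a : MilnorK n F) = MilnorSymbol (Fin.cons q a) :=
  rfl

end MilnorK

theorem IsDiscreteValuationRing.exists_units_eq_zpow_mul_map
    {A : Type*} [CommRing A] [IsDomain A] [IsDiscreteValuationRing A]
    {K : Type*} [Field K] [Algebra A K] [IsFractionRing A K]
    {π : A} (hπ : Irreducible π) {p : Kˣ} (hp : (p : K) = algebraMap A K π) (x : Kˣ) :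
    ∃ (m : ℤ) (u : Aˣ), x = p ^ m * Units.map (algebraMap A K).toMonoidHom u := by
  obtain ⟨m, u, hx⟩ := exists_units_eq_smul_zpow_of_irreducible hπ x.ne_zero
  refine ⟨m, u, Units.ext ?_⟩
  simp [hx, hp, Units.smul_def, Algebra.smul_def, mul_comm]

/-- For a DVR `A` with fraction field `K`, uniformizer `π` and residue field `k`, the
specialisation map satisfies `sp_π(α) = ∂({-π}·α)`: multiplication by the symbol `{-π}`
is realised by a homomorphism `L` sending `{a_1, ..., a_n}` to `{-π, a_1, ..., a_n}`,
and `sp_π = ∂ ∘ L`. -/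
theorem specialisation_eq_tame_symbol_mul_neg_uniformizer
    (A : Type*) [CommRing A] [IsDomain A] [IsDiscreteValuationRing A]
    (K : Type*) [Field K] [Algebra A K] [IsFractionRing A K]
    (π : A) (hπ : Irreducible π) (p : Kˣ) (hp : (p : K) = algebraMap A K π) (n : ℕ)
    (D : MilnorK (n + 1) K →+ MilnorK n (IsLocalRing.ResidueField A))
    (hD1 : ∀ u : Fin n → Aˣ,
      D (MilnorSymbol (Fin.cons p
          (fun i => Units.map (algebraMap A K).toMonoidHom (u i)))) =
        MilnorSymbol (fun i => Units.map (IsLocalRing.residue A).toMonoidHom (u i)))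
    (hD2 : ∀ u : Fin (n + 1) → Aˣ,
      D (MilnorSymbol (fun i => Units.map (algebraMap A K).toMonoidHom (u i))) = 0)
    (sp : MilnorK n K →+ MilnorK n (IsLocalRing.ResidueField A))
    (hsp : ∀ (m : Fin n → ℤ) (u : Fin n → Aˣ),
      sp (MilnorSymbol (fun i => p ^ (m i) * Units.map (algebraMap A K).toMonoidHom (u i))) =
        MilnorSymbol (fun i => Units.map (IsLocalRing.residue A).toMonoidHom (u i))) :
    ∃ L : MilnorK n K →+ MilnorK (n + 1) K,
      (∀ a : Fin n → Kˣ, L (MilnorSymbol a) = MilnorSymbol (Fin.cons (-p) a)) ∧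
      ∀ α : MilnorK n K, sp α = D (L α) := by
  have on_symbols : ∀ a : Fin n → Kˣ,
      sp (MilnorSymbol a) = D (MilnorK.consHom (-p) (MilnorSymbol a)) := by
    intro a
    choose m u hmu using fun i => IsDiscreteValuationRing.exists_units_eq_zpow_mul_map hπ hp (a i)
    obtain rfl : a = _ := funext hmu
    set ι := Units.map (algebraMap A K).toMonoidHom
    have hD_neg_one : D (MilnorSymbol (Fin.cons (-1) fun i => ι (u i))) = 0 := by
      convert hD2 (Fin.cons (-1) u) using 3
      ext i : 1
      cases i using Fin.cases <;> simp [ι]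
    rw [hsp, MilnorK.consHom_symbol, MilnorK.symbol_cons_neg_zpow_mul, ← neg_one_mul,
      MilnorK.symbol_cons_mul, map_add, hD_neg_one, hD1, zero_add]
  exact ⟨MilnorK.consHom (-p), MilnorK.consHom_symbol (-p),
    DFunLike.congr_fun (MilnorK.addMonoidHom_ext (g := D.comp (MilnorK.consHom (-p))) on_symbols)⟩
end
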